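/- (Hardy inequality on the Heisenberg group, Garofalo–Lanconelli.) For every u ∈ C_c^∞(ℝ^{2N+1}), one has ∫_{ℝ^{2N+1}} |∇_H u(w)|² dw ≥ N² ∫_{ℝ^{2N+1}} (|z|²/(|z|⁴ + l²)) |u(w)|² dw, where w = (z,l). -/

import Mathlib

open MeasureTheory Set Real

noncomputable section

/-- The Heisenberg group `ℍ^N = ℝ^N × ℝ^N × ℝ`, with points `w = (x, y, l)`, `z = (x, y)`. -/
abbrev H (N : ℕ) : Type := (Fin N → ℝ) × (Fin N → ℝ) × ℝ

/-- The coefficient vector at `w` of the vector field `X_j = ∂_{x_j} + 2 y_j ∂_l`. -/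
def Xvec (N : ℕ) (j : Fin N) (w : H N) : H N := (Pi.single j 1, 0, 2 * w.2.1 j)

/-- The coefficient vector at `w` of the vector field `Y_j = ∂_{y_j} - 2 x_j ∂_l`. -/
def Yvec (N : ℕ) (j : Fin N) (w : H N) : H N := (0, Pi.single j 1, -2 * w.1 j)

/-- `X_j f`, as a directional derivative. -/
def Xop (N : ℕ) (j : Fin N) (f : H N → ℝ) (w : H N) : ℝ := fderiv ℝ f w (Xvec N j w)

/-- `Y_j f`, as a directional derivative. -/
def Yop (N : ℕ) (j : Fin N) (f : H N → ℝ) (w : H N) : ℝ := fderiv ℝ f w (Yvec N j w)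

/-- The squared horizontal gradient `|∇_H f|² = Σ_j ((X_j f)² + (Y_j f)²)`. -/
def gradHsq (N : ℕ) (f : H N → ℝ) (w : H N) : ℝ :=
  ∑ j, (Xop N j f w) ^ 2 + ∑ j, (Yop N j f w) ^ 2

/-- The sub-Laplacian `Δ_H f = Σ_j (X_j(X_j f) + Y_j(Y_j f))`. -/
def subLap (N : ℕ) (f : H N → ℝ) (w : H N) : ℝ :=
  ∑ j, Xop N j (Xop N j f) w + ∑ j, Yop N j (Yop N j f) w

/-- `|z|²` for `w = (z, l) = (x, y, l)`. -/
def zsq (N : ℕ) (w : H N) : ℝ := ∑ j, (w.1 j) ^ 2 + ∑ j, (w.2.1 j) ^ 2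

/-- The Korányi gauge `d(w) = (|z|⁴ + l²)^{1/4}`. -/
def dgauge (N : ℕ) (w : H N) : ℝ := ((zsq N w) ^ 2 + (w.2.2) ^ 2) ^ ((1 : ℝ) / 4)

/-!
For `ε > 0` let `s = d⁴ + ε = |z|⁴ + l² + ε` and take the horizontal field
`(F, G) = -(N/4) ∇_H s / s = -N ∇_H log s^{1/4}`. Expanding
`0 ≤ Σ_j (X_j u - F_j u)² + (Y_j u - G_j u)²` and integrating away the total derivatives
`X_j (F_j u²)`, `Y_j (G_j u²)` (the fields `X_j`, `Y_j` are divergence free) gives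
`∫ |∇_H u|² ≥ ∫ (-div_H (F, G) - |(F, G)|²) u²`. As `Δ_H s = 8 (N + 2) |z|²` and
`|∇_H s|² = 16 |z|² d⁴`, this weight is at least `N² |z|² / s`, and Fatou's lemma lets `ε → 0`.
-/

section IntegrationByParts

variable {E : Type*} [NormedAddCommGroup E] [NormedSpace ℝ E] [MeasurableSpace E]
  [BorelSpace E] {μ : Measure E}

lemma integrable_fderiv_apply [IsFiniteMeasureOnCompacts μ] {f : E → ℝ} (hf : ContDiff ℝ 1 f)
    (hc : HasCompactSupport f) {V : E → E} (hV : Continuous V) :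
    Integrable (fun x => fderiv ℝ f x (V x)) μ :=
  ((hf.continuous_fderiv one_ne_zero).clm_apply hV).integrable_of_hasCompactSupport
    ((hc.fderiv ℝ).mono fun x hx h0 => hx (by simp [h0]))

lemma integral_fderiv_apply_eq_zero [FiniteDimensional ℝ E] [μ.IsAddHaarMeasure] {f : E → ℝ}
    (hf : ContDiff ℝ 1 f) (hc : HasCompactSupport f) (v : E) : ∫ x, fderiv ℝ f x v ∂μ = 0 := by
  simpa using integral_mul_fderiv_eq_neg_fderiv_mul_of_integrable (μ := μ)
    (f := fun _ => (1 : ℝ)) (g := f) (v := v) (by simp)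
    (by simpa using integrable_fderiv_apply hf hc continuous_const)
    (by simpa using hf.continuous.integrable_of_hasCompactSupport hc)
    (fun x _ => differentiableAt_const _) (fun x _ => hf.differentiable one_ne_zero x)

/-- As `c v = 0`, the derivative of `f` along `c x • v` is that of `c * f` along `v`. -/
lemma integral_fderiv_apply_add_smul_eq_zero [FiniteDimensional ℝ E] [μ.IsAddHaarMeasure]
    {f : E → ℝ} (hf : ContDiff ℝ 1 f) (hc : HasCompactSupport f) (c : E →L[ℝ] ℝ) {v : E}
    (hcv : c v = 0) (e : E) :
    ∫ x, fderiv ℝ f x (e + c x • v) ∂μ = 0 := by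
  have hcf : ContDiff ℝ 1 (fun x => c x * f x) := c.contDiff.mul hf
  have hsplit : ∀ x, fderiv ℝ f x (e + c x • v)
      = fderiv ℝ f x e + fderiv ℝ (fun x => c x * f x) x v := fun x => by
    simp [fderiv_fun_mul c.differentiableAt (hf.differentiable one_ne_zero x), hcv]
  simp_rw [hsplit]
  rw [integral_add (integrable_fderiv_apply hf hc continuous_const)
    (integrable_fderiv_apply hcf hc.mul_left continuous_const),
    integral_fderiv_apply_eq_zero hf hc, integral_fderiv_apply_eq_zero hcf hc.mul_left, add_zero]

end IntegrationByParts

section DirectionalDerivative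

variable {E : Type*} [NormedAddCommGroup E] [NormedSpace ℝ E]

lemma fderiv_mul_sq_sub_le {F u : E → ℝ} {x : E} (hF : DifferentiableAt ℝ F x)
    (hu : DifferentiableAt ℝ u x) (v : E) :
    fderiv ℝ (fun y => F y * u y ^ 2) x v - u x ^ 2 * (fderiv ℝ F x v + F x ^ 2)
      ≤ (fderiv ℝ u x v) ^ 2 := by
  simp (disch := fun_prop) [fderiv_fun_mul, fderiv_fun_pow]
  nlinarith [sq_nonneg (fderiv ℝ u x v - F x * u x)]

lemma neg_fderiv_neg_mul_div_sub_sq {g s : E → ℝ} {x : E} (hg : DifferentiableAt ℝ g x)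
    (hs : DifferentiableAt ℝ s x) (hs0 : s x ≠ 0) (c : ℝ) (v : E) :
    -fderiv ℝ (fun y => -c * g y / s y) x v - (-c * g x / s x) ^ 2
      = c * fderiv ℝ g x v / s x - c * g x * fderiv ℝ s x v / s x ^ 2
        - c ^ 2 * g x ^ 2 / s x ^ 2 := by
  have hinv := (hasDerivAt_inv hs0).comp_hasFDerivAt x hs.hasFDerivAt
  have hF : HasFDerivAt (fun y => -c * g y / s y) _ x := (hg.hasFDerivAt.const_mul (-c)).mul hinv
  rw [hF.fderiv]
  simp only [add_apply, smul_apply, smul_eq_mul]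
  field_simp
  ring

end DirectionalDerivative

lemma lintegral_le_of_tendsto_of_forall_le {α : Type*} [MeasurableSpace α] {μ : Measure α}
    {f : ℕ → α → ENNReal} {g : α → ENNReal} {C : ENNReal} (hf : ∀ n, Measurable (f n))
    (hlim : ∀ x, Filter.Tendsto (fun n => f n x) Filter.atTop (nhds (g x)))
    (hle : ∀ n, ∫⁻ x, f n x ∂μ ≤ C) : ∫⁻ x, g x ∂μ ≤ C :=
  calc ∫⁻ x, g x ∂μ = ∫⁻ x, Filter.liminf (fun n => f n x) Filter.atTop ∂μ :=
        lintegral_congr fun x => (hlim x).liminf_eq.symm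
    _ ≤ Filter.liminf (fun n => ∫⁻ x, f n x ∂μ) Filter.atTop := lintegral_liminf_le hf
    _ ≤ C := Filter.liminf_le_of_frequently_le' (Filter.Frequently.of_forall hle)

namespace Heisenberg

variable {N : ℕ}

instance isAddHaarMeasure_volume : (volume : Measure (H N)).IsAddHaarMeasure := by
  have : (volume : Measure ((Fin N → ℝ) × ℝ)).IsAddHaarMeasure :=
    Measure.prod.instIsAddHaarMeasure _ _
  exact Measure.prod.instIsAddHaarMeasure _ _

@[simp]
lemma fderiv_x_apply (i : Fin N) (w v : H N) :
    fderiv ℝ (fun w : H N => w.1 i) w v = v.1 i := by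
  rw [fderiv_apply (by fun_prop) i]
  simp [fderiv_fst]

@[simp]
lemma fderiv_y_apply (i : Fin N) (w v : H N) :
    fderiv ℝ (fun w : H N => w.2.1 i) w v = v.2.1 i := by
  rw [fderiv_apply (by fun_prop) i, fderiv.fst (by fun_prop)]
  simp [fderiv_snd]

@[simp]
lemma fderiv_l_apply (w v : H N) : fderiv ℝ (fun w : H N => w.2.2) w v = v.2.2 := by
  rw [fderiv.snd (by fun_prop)]
  simp [fderiv_snd]

@[fun_prop]
lemma contDiff_zsq {n : WithTop ℕ∞} : ContDiff ℝ n (zsq N) := by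
  unfold zsq
  fun_prop

@[fun_prop]
lemma differentiable_zsq : Differentiable ℝ (zsq N) :=
  contDiff_zsq.differentiable one_ne_zero

lemma zsq_nonneg (w : H N) : 0 ≤ zsq N w := by
  unfold zsq
  positivity

lemma fderiv_zsq_apply (w v : H N) :
    fderiv ℝ (zsq N) w v = ∑ i, 2 * w.1 i * v.1 i + ∑ i, 2 * w.2.1 i * v.2.1 i := by
  unfold zsq
  simp (disch := fun_prop) [fderiv_fun_sum, fderiv_fun_add, fderiv_fun_pow]

lemma integral_Xop_eq_zero (j : Fin N) {f : H N → ℝ} (hf : ContDiff ℝ 1 f)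
    (hc : HasCompactSupport f) : ∫ w, Xop N j f w = 0 := by
  have := integral_fderiv_apply_add_smul_eq_zero (μ := volume) hf hc
    (2 • (ContinuousLinearMap.proj j ∘L ContinuousLinearMap.fst ℝ _ ℝ ∘L
      ContinuousLinearMap.snd ℝ (Fin N → ℝ) _)) (v := ((0, 0, 1) : H N)) (by simp)
    (Pi.single j 1, 0, 0)
  convert this using 3 with w
  simp [Xop, Xvec]

lemma integral_Yop_eq_zero (j : Fin N) {f : H N → ℝ} (hf : ContDiff ℝ 1 f)
    (hc : HasCompactSupport f) : ∫ w, Yop N j f w = 0 := by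
  have := integral_fderiv_apply_add_smul_eq_zero (μ := volume) hf hc
    ((-2 : ℝ) • (ContinuousLinearMap.proj j ∘L
      ContinuousLinearMap.fst ℝ _ ((Fin N → ℝ) × ℝ)))
    (v := ((0, 0, 1) : H N)) (by simp) (0, Pi.single j 1, 0)
  convert this using 3 with w
  simp [Yop, Yvec]

@[fun_prop]
lemma differentiable_Xvec (j : Fin N) : Differentiable ℝ (Xvec N j) := by
  unfold Xvec
  fun_prop

@[fun_prop]
lemma differentiable_Yvec (j : Fin N) : Differentiable ℝ (Yvec N j) := by
  unfold Yvec
  fun_prop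

lemma integrable_gradHsq {u : H N → ℝ} (hu : ContDiff ℝ 1 u) (huc : HasCompactSupport u) :
    Integrable (gradHsq N u) := by
  have hcont := hu.continuous_fderiv one_ne_zero
  refine Continuous.integrable_of_hasCompactSupport ?_
    ((huc.fderiv ℝ).mono fun w hw h0 => hw (by simp [gradHsq, Xop, Yop, h0]))
  have hX := fun j => (differentiable_Xvec (N := N) j).continuous
  have hY := fun j => (differentiable_Yvec (N := N) j).continuous
  unfold gradHsq Xop Yop
  fun_prop

def hardyWeight (N : ℕ) (F G : Fin N → H N → ℝ) (w : H N) : ℝ :=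
  ∑ j, (-Xop N j (F j) w - F j w ^ 2) + ∑ j, (-Yop N j (G j) w - G j w ^ 2)

lemma mul_sq_le_gradHsq_sub {u : H N → ℝ} (hu : Differentiable ℝ u)
    {F G : Fin N → H N → ℝ} (hF : ∀ j, Differentiable ℝ (F j))
    (hG : ∀ j, Differentiable ℝ (G j)) (w : H N) :
    hardyWeight N F G w * u w ^ 2 ≤ gradHsq N u w - (∑ j, Xop N j (fun w => F j w * u w ^ 2) w
        + ∑ j, Yop N j (fun w => G j w * u w ^ 2) w) := by
  have hX := Finset.sum_le_sum fun j (_ : j ∈ Finset.univ) =>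
    fderiv_mul_sq_sub_le (hF j w) (hu w) (Xvec N j w)
  have hY := Finset.sum_le_sum fun j (_ : j ∈ Finset.univ) =>
    fderiv_mul_sq_sub_le (hG j w) (hu w) (Yvec N j w)
  rw [Finset.sum_sub_distrib, ← Finset.mul_sum, Finset.sum_add_distrib] at hX hY
  simp only [hardyWeight, gradHsq, Xop, Yop, Finset.sum_sub_distrib, Finset.sum_neg_distrib]
  linear_combination hX + hY

theorem lintegral_mul_sq_le_lintegral_gradHsq {u : H N → ℝ} (hu : ContDiff ℝ 1 u)
    (huc : HasCompactSupport u) {F G : Fin N → H N → ℝ} (hF : ∀ j, ContDiff ℝ 1 (F j))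
    (hG : ∀ j, ContDiff ℝ 1 (G j)) {V : H N → ℝ} (hV : Continuous V) (hV0 : ∀ w, 0 ≤ V w)
    (hVle : ∀ w, V w ≤ hardyWeight N F G w) :
    ∫⁻ w, ENNReal.ofReal (V w * u w ^ 2) ≤ ∫⁻ w, ENNReal.ofReal (gradHsq N u w) := by
  have hFu : ∀ j, ContDiff ℝ 1 (fun w => F j w * u w ^ 2) := fun j => (hF j).mul (hu.pow 2)
  have hGu : ∀ j, ContDiff ℝ 1 (fun w => G j w * u w ^ 2) := fun j => (hG j).mul (hu.pow 2)
  have hc : ∀ f : H N → ℝ, HasCompactSupport (fun w => f w * u w ^ 2) := fun f =>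
    huc.mono fun w hw h0 => hw (by simp [h0])
  have hXi : ∀ j, Integrable (fun w => Xop N j (fun w => F j w * u w ^ 2) w) := fun j =>
    integrable_fderiv_apply (hFu j) (hc _) (differentiable_Xvec j).continuous
  have hYi : ∀ j, Integrable (fun w => Yop N j (fun w => G j w * u w ^ 2) w) := fun j =>
    integrable_fderiv_apply (hGu j) (hc _) (differentiable_Yvec j).continuous
  have hXi' := integrable_finsetSum Finset.univ fun j _ => hXi j
  have hYi' := integrable_finsetSum Finset.univ fun j _ => hYi j
  have hDi : Integrable (fun w => ∑ j, Xop N j (fun w => F j w * u w ^ 2) w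
      + ∑ j, Yop N j (fun w => G j w * u w ^ 2) w) := hXi'.add hYi'
  have hdiv : ∫ w, (∑ j, Xop N j (fun w => F j w * u w ^ 2) w
      + ∑ j, Yop N j (fun w => G j w * u w ^ 2) w) = 0 := by
    rw [integral_add hXi' hYi', integral_finsetSum _ fun j _ => hXi j,
      integral_finsetSum _ fun j _ => hYi j]
    simp [integral_Xop_eq_zero _ (hFu _) (hc _), integral_Yop_eq_zero _ (hGu _) (hc _)]
  have hVi : Integrable (fun w => V w * u w ^ 2) :=
    (hV.mul (hu.continuous.pow 2)).integrable_of_hasCompactSupport (hc V)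
  have hgrad := integrable_gradHsq hu huc
  rw [← ofReal_integral_eq_lintegral_ofReal hVi
      (ae_of_all _ fun w => mul_nonneg (hV0 w) (sq_nonneg _)),
    ← ofReal_integral_eq_lintegral_ofReal hgrad
      (ae_of_all _ fun w => by simp only [gradHsq]; positivity)]
  refine ENNReal.ofReal_le_ofReal ?_
  calc ∫ w, V w * u w ^ 2
      ≤ ∫ w, (gradHsq N u w - (∑ j, Xop N j (fun w => F j w * u w ^ 2) w
          + ∑ j, Yop N j (fun w => G j w * u w ^ 2) w)) := by
        refine integral_mono hVi (hgrad.sub hDi) fun w => ?_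
        exact (mul_le_mul_of_nonneg_right (hVle w) (sq_nonneg _)).trans
          (mul_sq_le_gradHsq_sub (hu.differentiable one_ne_zero)
            (fun j => (hF j).differentiable one_ne_zero)
            (fun j => (hG j).differentiable one_ne_zero) w)
    _ = ∫ w, gradHsq N u w := by rw [integral_sub hgrad hDi, hdiv, sub_zero]

lemma differentiable_Xop {s : H N → ℝ} (hs : ContDiff ℝ 2 s) (j : Fin N) :
    Differentiable ℝ (Xop N j s) := by
  have := (hs.fderiv_right (m := 1) (by norm_num)).differentiable one_ne_zero
  unfold Xop
  fun_prop

lemma differentiable_Yop {s : H N → ℝ} (hs : ContDiff ℝ 2 s) (j : Fin N) :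
    Differentiable ℝ (Yop N j s) := by
  have := (hs.fderiv_right (m := 1) (by norm_num)).differentiable one_ne_zero
  unfold Yop
  fun_prop

lemma hardyWeight_neg_mul_div {s : H N → ℝ} (hs : ContDiff ℝ 2 s) {w : H N} (hs0 : s w ≠ 0)
    (c : ℝ) :
    hardyWeight N (fun j w => -c * Xop N j s w / s w) (fun j w => -c * Yop N j s w / s w) w
      = c * subLap N s w / s w - (c + c ^ 2) * gradHsq N s w / s w ^ 2 := by
  have hsw := (hs.differentiable (by norm_num)) w
  have hX : ∀ j, -Xop N j (fun w => -c * Xop N j s w / s w) w - (-c * Xop N j s w / s w) ^ 2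
      = c * Xop N j (Xop N j s) w / s w - (c + c ^ 2) * Xop N j s w ^ 2 / s w ^ 2 := fun j => by
    rw [Xop, neg_fderiv_neg_mul_div_sub_sq (differentiable_Xop hs j w) hsw hs0]
    simp only [Xop]
    ring
  have hY : ∀ j, -Yop N j (fun w => -c * Yop N j s w / s w) w - (-c * Yop N j s w / s w) ^ 2
      = c * Yop N j (Yop N j s) w / s w - (c + c ^ 2) * Yop N j s w ^ 2 / s w ^ 2 := fun j => by
    rw [Yop, neg_fderiv_neg_mul_div_sub_sq (differentiable_Yop hs j w) hsw hs0]
    simp only [Yop]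
    ring
  simp only [hardyWeight, hX, hY, subLap, gradHsq, Finset.sum_sub_distrib, ← Finset.mul_sum,
    ← Finset.sum_div]
  ring

/-- `d⁴ + ε`, a smooth positive regularisation of the fourth power of `dgauge`. -/
def regGauge4 (N : ℕ) (ε : ℝ) (w : H N) : ℝ := zsq N w ^ 2 + w.2.2 ^ 2 + ε

lemma regGauge4_pos {ε : ℝ} (hε : 0 < ε) (w : H N) : 0 < regGauge4 N ε w := by
  unfold regGauge4
  positivity

lemma contDiff_regGauge4 (ε : ℝ) : ContDiff ℝ 2 (regGauge4 N ε) := by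
  unfold regGauge4 zsq
  fun_prop

lemma Xop_regGauge4 (ε : ℝ) (j : Fin N) :
    Xop N j (regGauge4 N ε) = fun w => 4 * (zsq N w * w.1 j + w.2.2 * w.2.1 j) := by
  funext w
  unfold Xop regGauge4
  simp (disch := fun_prop) [Xvec, fderiv_zsq_apply, fderiv_fun_add, fderiv_fun_pow,
    Pi.single_apply]
  ring

lemma Yop_regGauge4 (ε : ℝ) (j : Fin N) :
    Yop N j (regGauge4 N ε) = fun w => 4 * (zsq N w * w.2.1 j - w.2.2 * w.1 j) := by
  funext w
  unfold Yop regGauge4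
  simp (disch := fun_prop) [Yvec, fderiv_zsq_apply, fderiv_fun_add, fderiv_fun_pow,
    Pi.single_apply]
  ring

lemma Xop_Xop_regGauge4 (ε : ℝ) (j : Fin N) (w : H N) :
    Xop N j (Xop N j (regGauge4 N ε)) w = 4 * (zsq N w + 2 * w.1 j ^ 2 + 2 * w.2.1 j ^ 2) := by
  rw [Xop_regGauge4, Xop]
  simp (disch := fun_prop) [Xvec, fderiv_zsq_apply, fderiv_fun_add, fderiv_fun_mul,
    Pi.single_apply]
  ring

lemma Yop_Yop_regGauge4 (ε : ℝ) (j : Fin N) (w : H N) :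
    Yop N j (Yop N j (regGauge4 N ε)) w = 4 * (zsq N w + 2 * w.1 j ^ 2 + 2 * w.2.1 j ^ 2) := by
  rw [Yop_regGauge4, Yop]
  simp (disch := fun_prop) [Yvec, fderiv_zsq_apply, fderiv_fun_sub, fderiv_fun_mul,
    Pi.single_apply]
  ring

lemma subLap_regGauge4 (ε : ℝ) (w : H N) :
    subLap N (regGauge4 N ε) w = 8 * (N + 2) * zsq N w := by
  simp only [subLap, Xop_Xop_regGauge4, Yop_Yop_regGauge4, ← Finset.mul_sum,
    Finset.sum_add_distrib, Finset.sum_const, Finset.card_univ, Fintype.card_fin, nsmul_eq_mul]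
  unfold zsq
  ring

lemma gradHsq_regGauge4 (ε : ℝ) (w : H N) :
    gradHsq N (regGauge4 N ε) w = 16 * zsq N w * (zsq N w ^ 2 + w.2.2 ^ 2) := by
  have h : ∀ j, (4 * (zsq N w * w.1 j + w.2.2 * w.2.1 j)) ^ 2
      + (4 * (zsq N w * w.2.1 j - w.2.2 * w.1 j)) ^ 2
      = 16 * (zsq N w ^ 2 + w.2.2 ^ 2) * (w.1 j ^ 2 + w.2.1 j ^ 2) := fun j => by ring
  simp only [gradHsq, Xop_regGauge4, Yop_regGauge4, ← Finset.sum_add_distrib, h,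
    ← Finset.mul_sum]
  unfold zsq
  rw [Finset.sum_add_distrib]
  ring

lemma le_hardyWeight_regGauge4 {ε : ℝ} (hε : 0 < ε) (w : H N) :
    (N : ℝ) ^ 2 * (zsq N w / regGauge4 N ε w) ≤ hardyWeight N
      (fun j w => -(N / 4) * Xop N j (regGauge4 N ε) w / regGauge4 N ε w)
      (fun j w => -(N / 4) * Yop N j (regGauge4 N ε) w / regGauge4 N ε w) w := by
  have hs := regGauge4_pos hε w
  rw [hardyWeight_neg_mul_div (contDiff_regGauge4 ε) hs.ne', subLap_regGauge4,
    gradHsq_regGauge4]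
  have hgap : (N / 4 : ℝ) * (8 * (N + 2) * zsq N w) / regGauge4 N ε w
      - (N / 4 + (N / 4) ^ 2) * (16 * zsq N w * (zsq N w ^ 2 + w.2.2 ^ 2)) / regGauge4 N ε w ^ 2
      - N ^ 2 * (zsq N w / regGauge4 N ε w)
      = (N ^ 2 + 4 * N) * ε * zsq N w / regGauge4 N ε w ^ 2 := by
    field_simp
    unfold regGauge4
    ring
  have := zsq_nonneg w
  have : 0 ≤ (N ^ 2 + 4 * N : ℝ) * ε * zsq N w / regGauge4 N ε w ^ 2 := by positivity
  linarith

lemma continuous_zsq_div_regGauge4 {ε : ℝ} (hε : 0 < ε) :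
    Continuous (fun w : H N => zsq N w / regGauge4 N ε w) :=
  differentiable_zsq.continuous.div (contDiff_regGauge4 ε).continuous
    fun w => (regGauge4_pos hε w).ne'

theorem lintegral_hardy_regGauge4 {u : H N → ℝ} (hu : ContDiff ℝ 1 u)
    (huc : HasCompactSupport u) {ε : ℝ} (hε : 0 < ε) :
    ∫⁻ w, ENNReal.ofReal ((N : ℝ) ^ 2 * (zsq N w / regGauge4 N ε w) * u w ^ 2)
      ≤ ∫⁻ w, ENNReal.ofReal (gradHsq N u w) := by
  have hs0 : ∀ w, regGauge4 N ε w ≠ 0 := fun w => (regGauge4_pos hε w).ne'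
  have hs : ContDiff ℝ 1 (regGauge4 N ε) := (contDiff_regGauge4 ε).of_le one_le_two
  refine lintegral_mul_sq_le_lintegral_gradHsq hu huc (fun j => ?_) (fun j => ?_)
    (continuous_const.mul (continuous_zsq_div_regGauge4 hε))
    (fun w => mul_nonneg (sq_nonneg _) (div_nonneg (zsq_nonneg w) (regGauge4_pos hε w).le))
    (le_hardyWeight_regGauge4 hε)
  · simp only [Xop_regGauge4]
    exact ContDiff.div (by fun_prop) hs hs0
  · simp only [Yop_regGauge4]
    exact ContDiff.div (by fun_prop) hs hs0

lemma tendsto_zsq_div_regGauge4 (w : H N) :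
    Filter.Tendsto (fun n : ℕ => zsq N w / regGauge4 N (1 / (n + 1)) w) Filter.atTop
      (nhds (zsq N w / (zsq N w ^ 2 + w.2.2 ^ 2))) := by
  rcases (zsq_nonneg w).eq_or_lt with hz | hz
  · simp [← hz]
  · have hden : Filter.Tendsto (fun n : ℕ => regGauge4 N (1 / (n + 1)) w) Filter.atTop
        (nhds (zsq N w ^ 2 + w.2.2 ^ 2)) := by
      simpa [regGauge4] using tendsto_one_div_add_atTop_nhds_zero_nat.const_add
        (zsq N w ^ 2 + w.2.2 ^ 2)
    exact tendsto_const_nhds.div hden (by positivity)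

end Heisenberg

open Heisenberg

theorem stmt_11_general (N : ℕ) (u : H N → ℝ)
    (hu : ContDiff ℝ (⊤ : ℕ∞) u) (hsupp : HasCompactSupport u) :
    (N : ENNReal) ^ 2 *
        ∫⁻ w : H N,
          ENNReal.ofReal ((zsq N w / ((zsq N w) ^ 2 + (w.2.2) ^ 2)) * (u w) ^ 2)
      ≤ ∫⁻ w : H N, ENNReal.ofReal (gradHsq N u w) := by
  have hu1 : ContDiff ℝ 1 u := hu.of_le (by exact_mod_cast le_top)
  rw [← lintegral_const_mul' _ _ (by simp)]
  simp_rw [show (N : ENNReal) ^ 2 = ENNReal.ofReal ((N : ℝ) ^ 2) by simp, ← ENNReal.ofReal_mul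
    (sq_nonneg _), ← mul_assoc]
  refine lintegral_le_of_tendsto_of_forall_le (fun n => ?_) (fun w => ?_)
    (fun n => lintegral_hardy_regGauge4 hu1 hsupp (ε := 1 / (n + 1)) (by positivity))
  · exact ((continuous_const.mul (continuous_zsq_div_regGauge4 (by positivity))).mul
      (hu1.continuous.pow 2)).measurable.ennreal_ofReal
  · exact ENNReal.tendsto_ofReal
      (((tendsto_zsq_div_regGauge4 w).const_mul _).mul_const _)

theorem stmt_11 (N : ℕ) (hN : 1 ≤ N) (u : H N → ℝ)
    (hu : ContDiff ℝ (⊤ : ℕ∞) u) (hsupp : HasCompactSupport u) :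
    (N : ENNReal) ^ 2 *
        ∫⁻ w : H N,
          ENNReal.ofReal ((zsq N w / ((zsq N w) ^ 2 + (w.2.2) ^ 2)) * (u w) ^ 2)
      ≤ ∫⁻ w : H N, ENNReal.ofReal (gradHsq N u w) :=
  stmt_11_general N u hu hsupp
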